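/- Let θ ∈ (0, π/2], φ = arctan(1/sin θ), ψ₁ = π/2 − φ, ψ₂ = π/2 + φ, p_max = 1/2 + √(1 + sin²θ)/4, and let ε > 0 and ε_A ∈ [0, 1/2]. Define p'' = 1/2 + (1/8) sin θ (sin ψ₁ + sin ψ₂) + (1/4) √(1/4 − ε_A²) (cos ψ₁ − cos ψ₂) + (1/4) ε_A cos θ (cos ψ₁ + cos ψ₂). If p'' ≥ p_max − ε·p_max, then ε_A ≤ √(2 ε p_max / cos ψ₁). -/

import Mathlib

/-!
Since `arctan (1 / s) = π / 2 - arctan s` for `s = sin θ > 0`, the optimal angles are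
`ψ₁ = arctan s` and `ψ₂ = π - ψ₁`. Hence `sin ψ₂ = sin ψ₁`, `cos ψ₂ = -cos ψ₁`, the `cos θ` term
drops out, and the deficit `p_max - p''` equals `(1/2 - √(1/4 - ε_A²)) cos ψ₁ / 2`.
The tangent-line bound `√(1/4 - t) ≤ 1/2 - t` makes this at least `ε_A² cos ψ₁ / 2`,
and comparing with `ε p_max` gives the claim.
-/

open Real

lemma Real.sqrt_sq_sub_le_sub_div {a t : ℝ} (ha : 0 < a) (ht : t ≤ 2 * a ^ 2) :
    √(a ^ 2 - t) ≤ a - t / (2 * a) := by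
  have hbound : 0 ≤ a - t / (2 * a) := by
    rw [sub_nonneg, div_le_iff₀ (by positivity)]
    nlinarith
  refine Real.sqrt_le_iff.mpr ⟨hbound, ?_⟩
  have hsq : (a - t / (2 * a)) ^ 2 = a ^ 2 - t + (t / (2 * a)) ^ 2 := by
    field_simp
    ring
  nlinarith [sq_nonneg (t / (2 * a))]

/-- The deficit of the biased CHSH value from the unbiased optimum `1/2 + √(1 + s²)/4`
at the angles `ψ = arctan s` and `π - ψ`. -/
lemma chsh_optimum_sub_biased_eq (s q e c : ℝ) :
    (1 / 2 + √(1 + s ^ 2) / 4) -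
      (1 / 2 + (1 / 8) * s * (sin (arctan s) + sin (π - arctan s))
        + (1 / 4) * q * (cos (arctan s) - cos (π - arctan s))
        + (1 / 4) * e * c * (cos (arctan s) + cos (π - arctan s)))
      = (1 / 2 - q) * cos (arctan s) / 2 := by
  have hr : 0 < √(1 + s ^ 2) := Real.sqrt_pos.mpr (by positivity)
  have hr2 : √(1 + s ^ 2) ^ 2 = 1 + s ^ 2 := Real.sq_sqrt (by positivity)
  rw [sin_pi_sub, cos_pi_sub, cos_arctan, sin_arctan]
  field_simp
  linear_combination 32 * hr2

theorem stmt_7 (θ : ℝ) (hθ : θ ∈ Set.Ioc 0 (Real.pi / 2))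
    (φ ψ₁ ψ₂ pmax : ℝ)
    (hφ : φ = Real.arctan (1 / Real.sin θ))
    (hψ₁ : ψ₁ = Real.pi / 2 - φ) (hψ₂ : ψ₂ = Real.pi / 2 + φ)
    (hpmax : pmax = 1 / 2 + Real.sqrt (1 + Real.sin θ ^ 2) / 4)
    (ε : ℝ) (εA : ℝ) (hεA : εA ∈ Set.Icc (0 : ℝ) (1 / 2))
    (p'' : ℝ)
    (hp'' : p'' = 1 / 2 + (1 / 8) * Real.sin θ * (Real.sin ψ₁ + Real.sin ψ₂)
        + (1 / 4) * Real.sqrt (1 / 4 - εA ^ 2) * (Real.cos ψ₁ - Real.cos ψ₂)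
        + (1 / 4) * εA * Real.cos θ * (Real.cos ψ₁ + Real.cos ψ₂))
    (h : p'' ≥ pmax - ε * pmax) :
    εA ≤ Real.sqrt (2 * ε * pmax / Real.cos ψ₁) := by
  have hsin : 0 < sin θ :=
    sin_pos_of_pos_of_lt_pi hθ.1 (hθ.2.trans_lt (by linarith [pi_pos]))
  have hφ' : φ = π / 2 - arctan (sin θ) := by rw [hφ, one_div, arctan_inv_of_pos hsin]
  have hψ₁' : ψ₁ = arctan (sin θ) := by rw [hψ₁, hφ']; ring
  have hψ₂' : ψ₂ = π - arctan (sin θ) := by rw [hψ₂, hφ']; ring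
  have hdeficit : pmax - p'' = (1 / 2 - √(1 / 4 - εA ^ 2)) * cos ψ₁ / 2 := by
    rw [hpmax, hp'', hψ₂', hψ₁']
    exact chsh_optimum_sub_biased_eq _ _ _ _
  have hsqrt : √(1 / 4 - εA ^ 2) ≤ 1 / 2 - εA ^ 2 := by
    have := Real.sqrt_sq_sub_le_sub_div (a := 1 / 2) (t := εA ^ 2) one_half_pos
      (by nlinarith [hεA.1, hεA.2])
    norm_num at this
    exact this
  have hcos : 0 < cos ψ₁ := hψ₁' ▸ cos_arctan_pos _
  have hsq : εA ^ 2 ≤ 2 * ε * pmax / cos ψ₁ := by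
    rw [le_div_iff₀ hcos]
    nlinarith
  exact (le_abs_self εA).trans (Real.abs_le_sqrt hsq)
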